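/- arXiv:1010.2985 — 9 statements merged into one kernel-verified Lean document; each statement's English description precedes it below -/
import Mathlib

section
/- Let A₁, A₂, ..., Aₙ be n distinct subsets of an n-element set X. Then there exists an element x of X such that the sets A₁ \ {x}, A₂ \ {x}, ..., Aₙ \ {x} are all distinct. -/
/-!
Suppose every deletion `x` merges two of the sets, say `A i \ {x} = A j \ {x}` with `A i ≠ A j`.
Then `A i` and `A j` differ exactly in `x`, so the unit vector `e_x` is a difference of two
indicator vectors `𝟙_{A i} - 𝟙_{A j}`. Hence the differences of the `n` indicator vectors span
all of `ℚ^X`, of dimension `|X| = n`; but differences of `n` points span an affine direction of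
dimension at most `n - 1`.
-/

open Function Set

namespace Finset

variable {X : Type*} [DecidableEq X]

theorem eq_insert_of_sdiff_singleton_eq {s t : Finset X} {x : X} (h : s \ {x} = t \ {x})
    (hxs : x ∈ s) (hxt : x ∉ t) : s = insert x t := by
  rw [sdiff_singleton_eq_erase, sdiff_singleton_eq_erase, erase_eq_of_notMem hxt] at h
  rw [← h, insert_erase hxs]

theorem xor_mem_of_sdiff_singleton_eq {s t : Finset X} {x : X} (h : s \ {x} = t \ {x})
    (hst : s ≠ t) : Xor (x ∈ s) (x ∈ t) := by
  refine (xor_iff_not_iff _ _).2 fun hx => ?_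
  apply hst
  ext a
  by_cases hax : a = x
  · exact hax ▸ hx
  · simpa [hax] using congrArg (a ∈ ·) h

theorem indicator_insert_sub_indicator {R : Type*} [Ring R] {t : Finset X} {x : X}
    (hxt : x ∉ t) :
    (↑(insert x t) : Set X).indicator (1 : X → R) - (↑t : Set X).indicator 1 = Pi.single x 1 := by
  ext a
  by_cases hax : a = x
  · subst hax
    simp [indicator_of_notMem (mem_coe.not.2 hxt)]
  · by_cases hat : a ∈ t <;> simp [hax, hat]

end Finset

section Bondy

variable {ι X : Type*} [DecidableEq X] (R : Type*) [Ring R]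

theorem single_mem_vectorSpan_indicator_of_not_injective_sdiff {A : ι → Finset X}
    (hA : Injective A) {x : X} (hx : ¬Injective fun i => A i \ {x}) :
    Pi.single x 1 ∈ vectorSpan R (range fun i => (↑(A i) : Set X).indicator (1 : X → R)) := by
  obtain ⟨i, j, hij, hne⟩ := not_injective_iff.1 hx
  rcases Finset.xor_mem_of_sdiff_singleton_eq hij (hA.ne hne) with ⟨hxi, hxj⟩ | ⟨hxj, hxi⟩
  · rw [← Finset.indicator_insert_sub_indicator hxj,
      ← Finset.eq_insert_of_sdiff_singleton_eq hij hxi hxj]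
    exact vsub_mem_vectorSpan R (mem_range_self i) (mem_range_self j)
  · rw [← Finset.indicator_insert_sub_indicator hxi,
      ← Finset.eq_insert_of_sdiff_singleton_eq hij.symm hxj hxi]
    exact vsub_mem_vectorSpan R (mem_range_self j) (mem_range_self i)

variable {R}

theorem Submodule.eq_top_of_forall_single_mem [Finite X] {p : Submodule R (X → R)}
    (hp : ∀ x, Pi.single x 1 ∈ p) : p = ⊤ := by
  refine eq_top_iff.2 ((Pi.basisFun R X).span_eq ▸ Submodule.span_le.2 ?_)
  rintro _ ⟨x, rfl⟩
  simpa using hp x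

theorem Finset.exists_injective_sdiff_singleton [Fintype ι] [Nonempty ι] [Fintype X]
    (A : ι → Finset X) (hA : Injective A) (hcard : Fintype.card ι ≤ Fintype.card X) :
    ∃ x, Injective fun i => A i \ {x} := by
  by_contra! h
  have hι : 0 < Fintype.card ι := Fintype.card_pos
  have hspan := Submodule.eq_top_of_forall_single_mem
    fun x => single_mem_vectorSpan_indicator_of_not_injective_sdiff ℚ hA (h x)
  have hdim := finrank_vectorSpan_range_le ℚ (fun i => (↑(A i) : Set X).indicator (1 : X → ℚ))
    (Nat.sub_add_cancel hι).symm
  rw [hspan, finrank_top, Module.finrank_fintype_fun_eq_card] at hdim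
  omega

end Bondy

/-- **Bondy's theorem.** If `A₁, …, Aₙ` are `n` distinct subsets of an `n`-set `X`,
then there is an element `x ∈ X` such that the sets `Aᵢ \ {x}` are all distinct. -/
theorem bondy_theorem {X : Type} [Fintype X] [DecidableEq X] {n : ℕ} (hn : 0 < n)
    (hX : Fintype.card X = n) (A : Fin n → Finset X) (hA : Function.Injective A) :
    ∃ x : X, Function.Injective (fun i : Fin n => A i \ {x}) :=
  have : Nonempty (Fin n) := ⟨⟨0, hn⟩⟩
  Finset.exists_injective_sdiff_singleton A hA (by simp [hX])
end

section
/- Let X be a finite set and let 𝒜 be a family of distinct nonempty subsets of X with |𝒜| < |X|. Then there exists a subset X' of X with |X'| = |X| - |𝒜| such that the sets A ∩ (X \ X') for A ∈ 𝒜 are all distinct and all nonempty. -/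
/-!
Adjoin `∅` to `𝒜`. By Bondy's theorem the `|𝒜| + 1` sets of this family are separated by their
traces on some set `Y` of at most `|𝒜|` points; enlarge `Y` to a set `Z` of exactly `|𝒜|` points
and take `X' = Zᶜ`. Then the sets `A \ X' = A ∩ Z` are distinct, and none of them is empty, since
`∅` is the trace of `∅`.

Bondy's theorem itself is proved by splitting the family according to a point `x` on which two
of its sets differ, and gluing the separating sets of the two halves together with `x`.
-/

namespace Finset

variable {α : Type*} [DecidableEq α]

theorem inter_eq_inter_of_subset {A B Y Z : Finset α} (h : A ∩ Z = B ∩ Z) (hYZ : Y ⊆ Z) :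
    A ∩ Y = B ∩ Y := by
  rw [← inter_eq_right.mpr hYZ, ← inter_assoc, h, inter_assoc]

theorem injOn_inter_of_subset {ℬ : Finset (Finset α)} {Y Z : Finset α}
    (h : Set.InjOn (· ∩ Y) (ℬ : Set (Finset α))) (hYZ : Y ⊆ Z) :
    Set.InjOn (· ∩ Z) (ℬ : Set (Finset α)) :=
  fun _ hA _ hB hAB => h hA hB (inter_eq_inter_of_subset hAB hYZ)

theorem mem_iff_mem_of_inter_eq_inter {A B Y : Finset α} {x : α} (h : A ∩ Y = B ∩ Y)
    (hx : x ∈ Y) : x ∈ A ↔ x ∈ B := by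
  simpa [hx] using congrArg (x ∈ ·) h

theorem injOn_inter_insert_union {ℬ : Finset (Finset α)} {x : α} {Y₀ Y₁ : Finset α}
    (h₀ : Set.InjOn (· ∩ Y₀) (ℬ.filter (x ∉ ·) : Set (Finset α)))
    (h₁ : Set.InjOn (· ∩ Y₁) (ℬ.filter (x ∈ ·) : Set (Finset α))) :
    Set.InjOn (· ∩ insert x (Y₀ ∪ Y₁)) (ℬ : Set (Finset α)) := by
  intro A hA B hB hAB
  have hxAB : x ∈ A ↔ x ∈ B := mem_iff_mem_of_inter_eq_inter hAB (mem_insert_self _ _)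
  by_cases hxA : x ∈ A
  · exact h₁ (mem_filter.mpr ⟨hA, hxA⟩) (mem_filter.mpr ⟨hB, hxAB.mp hxA⟩)
      (inter_eq_inter_of_subset hAB (subset_union_right.trans (subset_insert _ _)))
  · exact h₀ (mem_filter.mpr ⟨hA, hxA⟩) (mem_filter.mpr ⟨hB, hxAB.not.mp hxA⟩)
      (inter_eq_inter_of_subset hAB (subset_union_left.trans (subset_insert _ _)))

/-- Bondy's theorem, in trace form. -/
theorem exists_card_lt_injOn_inter (ℬ : Finset (Finset α)) (hℬ : ℬ.Nonempty) :
    ∃ Y : Finset α, #Y < #ℬ ∧ Set.InjOn (· ∩ Y) (ℬ : Set (Finset α)) := by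
  induction ℬ using Finset.strongInduction with
  | H ℬ ih =>
  by_cases hle : #ℬ ≤ 1
  · exact ⟨∅, by simpa using hℬ.card_pos,
      fun A hA B hB _ => card_le_one.mp hle A hA B hB⟩
  obtain ⟨A, hA, B, hB, hAB⟩ := one_lt_card.mp (not_le.mp hle)
  obtain ⟨x, C, hC, D, hD, hxC, hxD⟩ : ∃ x, ∃ C ∈ ℬ, ∃ D ∈ ℬ, x ∈ C ∧ x ∉ D := by
    obtain ⟨x, hx⟩ : ∃ x, ¬(x ∈ A ↔ x ∈ B) := by
      by_contra! h
      exact hAB (ext h)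
    by_cases hxA : x ∈ A
    exacts [⟨x, A, hA, B, hB, hxA, by tauto⟩, ⟨x, B, hB, A, hA, by tauto, hxA⟩]
  obtain ⟨Y₁, hY₁, h₁⟩ := ih (ℬ.filter (x ∈ ·)) (filter_ssubset.mpr ⟨D, hD, hxD⟩)
    ⟨C, mem_filter.mpr ⟨hC, hxC⟩⟩
  obtain ⟨Y₀, hY₀, h₀⟩ := ih (ℬ.filter (x ∉ ·)) (filter_ssubset.mpr ⟨C, hC, not_not.mpr hxC⟩)
    ⟨D, mem_filter.mpr ⟨hD, hxD⟩⟩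
  refine ⟨insert x (Y₀ ∪ Y₁), ?_, injOn_inter_insert_union h₀ h₁⟩
  have := card_filter_add_card_filter_not (s := ℬ) (x ∈ ·)
  have := card_insert_le x (Y₀ ∪ Y₁)
  have := card_union_le Y₀ Y₁
  omega

end Finset

open Finset

/-- If `𝒜` is a family of distinct nonempty subsets of a finite set `X` with `|𝒜| < |X|`,
then there is a subset `X' ⊆ X` with `|X'| = |X| - |𝒜|` such that the sets
`A ∩ (X \ X') = A \ X'` for `A ∈ 𝒜` are all distinct and nonempty. -/
theorem bondy_extended_nonempty {X : Type} [Fintype X] [DecidableEq X]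
    (𝒜 : Finset (Finset X)) (hcard : 𝒜.card < Fintype.card X)
    (hne : ∀ A ∈ 𝒜, A.Nonempty) :
    ∃ X' : Finset X, X'.card = Fintype.card X - 𝒜.card ∧
      Set.InjOn (fun A : Finset X => A \ X') ↑𝒜 ∧
      ∀ A ∈ 𝒜, (A \ X').Nonempty := by
  have hempty : ∅ ∉ 𝒜 := fun h => not_nonempty_empty (hne ∅ h)
  obtain ⟨Y, hY, hinjY⟩ := exists_card_lt_injOn_inter (insert ∅ 𝒜) (insert_nonempty _ _)
  rw [card_insert_of_notMem hempty] at hY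
  obtain ⟨Z, hYZ, -, hZ⟩ := exists_subsuperset_card_eq (subset_univ Y) (Nat.le_of_lt_succ hY)
    (by simpa using hcard.le)
  have hinj := injOn_inter_of_subset hinjY hYZ
  refine ⟨Zᶜ, by rw [card_compl, hZ], ?_, fun A hA => ?_⟩
  · intro A hA B hB hAB
    simp only [sdiff_compl, inf_eq_inter] at hAB
    exact hinj (mem_insert_of_mem hA) (mem_insert_of_mem hB) hAB
  · rw [sdiff_compl, inf_eq_inter, nonempty_iff_ne_empty]
    intro hAZ
    have hA_empty := hinj (mem_insert_of_mem hA) (mem_insert_self _ _) (by simpa using hAZ)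
    exact hempty (hA_empty ▸ hA)
end

section
/- Every finite twin-free digraph D admits a separating code of size at most |V(D)| - 1; that is, there exists a vertex x such that removing x from the code V(D) still separates all pairs of vertices: for all distinct u, v, B₁⁺(u) ∩ (V(D) \ {x}) ≠ B₁⁺(v) ∩ (V(D) \ {x}). -/
/-
Twin-freeness says that the `n` in-balls are distinct subsets of an `n`-element set, so this is
Bondy's theorem. If no element `x` could be dropped, then for each `x` two of the sets would differ
exactly in `x`, and the difference of their indicator vectors in `ℚ^α` would be `±eₓ`. All such
differences lie in the span of the `n - 1` vectors `χᵢ - χᵢ₀` (`i ≠ i₀`), which would then be the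
whole `n`-dimensional space.
-/

def inBall {V : Type} (A : V → V → Prop) (x : V) : Set V := insert x {w | A w x}

def IsSepCode {V : Type} (A : V → V → Prop) (C : Set V) : Prop :=
  ∀ u v : V, u ≠ v → inBall A u ∩ C ≠ inBall A v ∩ C

def IsIdCode {V : Type} (A : V → V → Prop) (C : Set V) : Prop :=
  (∀ u : V, (inBall A u ∩ C).Nonempty) ∧ IsSepCode A C

def TwinFree {V : Type} (A : V → V → Prop) : Prop :=
  ∀ u v : V, u ≠ v → inBall A u ≠ inBall A v

open Function Module Submodule

section Bondy

variable {ι α : Type*}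

lemma xor_mem_of_diff_singleton_eq {S T : Set α} {x : α} (hST : S ≠ T)
    (h : S \ {x} = T \ {x}) : Xor (x ∈ S) (x ∈ T) := by
  rw [xor_iff_not_iff]
  intro hx
  refine hST (Set.ext fun y => ?_)
  rcases eq_or_ne y x with rfl | hy
  · tauto
  · simpa [hy] using Set.ext_iff.mp h y

lemma indicator_sub_indicator_eq_single {R : Type*} [AddGroupWithOne R] [DecidableEq α]
    {S T : Set α} {x : α} (h : S \ {x} = T \ {x}) (hxS : x ∈ S) (hxT : x ∉ T) :
    S.indicator 1 - T.indicator 1 = (Pi.single x 1 : α → R) := by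
  funext y
  rcases eq_or_ne y x with rfl | hy
  · simp [hxS, hxT]
  · have hyST : y ∈ S ↔ y ∈ T := by simpa [hy] using Set.ext_iff.mp h y
    by_cases hyS : y ∈ S
    · simp [hyS, hyST.mp hyS, hy]
    · simp [hyS, mt hyST.mpr hyS, hy]

lemma sub_mem_span_sub_base {K M : Type*} [Ring K] [AddCommGroup M] [Module K M]
    (v : ι → M) (i₀ i j : ι) :
    v i - v j ∈ span K (Set.range fun i : {i // i ≠ i₀} => v i - v i₀) := by
  have base : ∀ i, v i - v i₀ ∈ span K (Set.range fun i : {i // i ≠ i₀} => v i - v i₀) := by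
    intro i
    rcases eq_or_ne i i₀ with rfl | hi
    · simp
    · exact subset_span ⟨⟨i, hi⟩, rfl⟩
  simpa using sub_mem (base i) (base j)

lemma card_le_of_single_mem_span_sub_base {K : Type*} [Field K] [Fintype ι] [DecidableEq ι]
    [Fintype α] [DecidableEq α] (v : ι → α → K) (i₀ : ι)
    (h : ∀ x, Pi.single x 1 ∈ span K (Set.range fun i : {i // i ≠ i₀} => v i - v i₀)) :
    Fintype.card α ≤ Fintype.card ι - 1 := by
  have htop : span K (Set.range fun i : {i // i ≠ i₀} => v i - v i₀) = ⊤ := by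
    rw [eq_top_iff, ← (Pi.basisFun K α).span_eq, span_le]
    rintro _ ⟨x, rfl⟩
    simpa using h x
  calc Fintype.card α = finrank K (α → K) := (finrank_fintype_fun_eq_card K).symm
    _ = finrank K (span K (Set.range fun i : {i // i ≠ i₀} => v i - v i₀)) := by
      rw [htop, finrank_top]
    _ ≤ Fintype.card {i // i ≠ i₀} := finrank_range_le_card _
    _ = Fintype.card ι - 1 := by simp

theorem exists_injective_diff_singleton [Fintype ι] [Fintype α] [Nonempty ι] (S : ι → Set α)
    (hS : Injective S) (hcard : Fintype.card ι ≤ Fintype.card α) :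
    ∃ x, Injective fun i => S i \ {x} := by
  classical
  by_contra! hnot
  obtain ⟨i₀⟩ := ‹Nonempty ι›
  have hsingle : ∀ x, (Pi.single x 1 : α → ℚ) ∈
      span ℚ (Set.range fun i : {i // i ≠ i₀} => (S i).indicator 1 - (S i₀).indicator 1) := by
    intro x
    obtain ⟨i, j, hij, hne⟩ := not_injective_iff.mp (hnot x)
    rcases xor_mem_of_diff_singleton_eq (hS.ne hne) hij with ⟨hi, hj⟩ | ⟨hj, hi⟩
    · rw [← indicator_sub_indicator_eq_single hij hi hj]
      exact sub_mem_span_sub_base (fun i => (S i).indicator 1) i₀ i j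
    · rw [← indicator_sub_indicator_eq_single hij.symm hj hi]
      exact sub_mem_span_sub_base (fun i => (S i).indicator 1) i₀ j i
  have hle := card_le_of_single_mem_span_sub_base (fun i => (S i).indicator 1) i₀ hsingle
  have hpos := Fintype.card_pos (α := ι)
  omega

end Bondy

/-- Every finite twin-free digraph admits a separating code of size `|V(D)| - 1`:
some vertex `x` can be removed from the whole vertex set while still separating
all pairs of vertices. -/
theorem sepCode_of_twinFree {V : Type} [Fintype V] [Nonempty V] (A : V → V → Prop)
    (h : TwinFree A) :
    ∃ x : V, IsSepCode A ({x}ᶜ : Set V) := by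
  have hinj : Injective (inBall A) := fun u v huv => by_contra fun hne => h u v hne huv
  obtain ⟨x, hx⟩ := exists_injective_diff_singleton (inBall A) hinj le_rfl
  exact ⟨x, fun u v huv => by simpa only [← Set.sdiff_eq] using hx.ne huv⟩
end

section
/- Let D be a finite twin-free digraph and S a subset of vertices such that the induced subdigraph D - S is twin-free. Then the minimum size of an identifying code of D is at most the minimum size of an identifying code of D - S plus |S|. -/
/-- The minimum size of an identifying code of a digraph `(V, A)`. -/
noncomputable def gammaID {V : Type} (A : V → V → Prop) : ℕ :=
  sInf {n | ∃ C : Set V, IsIdCode A C ∧ C.ncard = n}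

section

variable {V : Type} {A : V → V → Prop}

def IsIdCodeOn (A : V → V → Prop) (C W : Set V) : Prop :=
  (∀ u ∈ W, (inBall A u ∩ C).Nonempty) ∧
    W.Pairwise fun u v => inBall A u ∩ C ≠ inBall A v ∩ C

lemma inBall_inter_eq_of_subset {C C₂ : Set V} (hC : C ⊆ C₂) {u v : V}
    (he : inBall A u ∩ C₂ = inBall A v ∩ C₂) : inBall A u ∩ C = inBall A v ∩ C := by
  rw [← Set.inter_eq_right.mpr hC, ← Set.inter_assoc, he, Set.inter_assoc]

namespace IsIdCodeOn

variable {C W : Set V}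

lemma mono {C₂ : Set V} (h : IsIdCodeOn A C W) (hC : C ⊆ C₂) : IsIdCodeOn A C₂ W :=
  ⟨fun u hu => (h.1 u hu).mono (Set.inter_subset_inter_right _ hC),
    h.2.mono' fun _ _ hne he => hne (inBall_inter_eq_of_subset hC he)⟩

lemma insert_of_forall_ne {s : V} (h : IsIdCodeOn A C W) (hs : (inBall A s ∩ C).Nonempty)
    (hsep : ∀ v ∈ W, s ≠ v → inBall A s ∩ C ≠ inBall A v ∩ C) :
    IsIdCodeOn A C (insert s W) :=
  ⟨Set.forall_mem_insert.mpr ⟨hs, h.1⟩,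
    Set.pairwise_insert.mpr ⟨h.2, fun v hv hsv => ⟨hsep v hv hsv, (hsep v hv hsv).symm⟩⟩⟩

lemma exists_insert (hD : TwinFree A) (h : IsIdCodeOn A C W) (s : V) :
    ∃ x, IsIdCodeOn A (insert x C) (insert s W) := by
  by_cases hsep : ∀ v ∈ W, s ≠ v → inBall A s ∩ C ≠ inBall A v ∩ C
  · refine ⟨s, (h.mono (Set.subset_insert s C)).insert_of_forall_ne
      ⟨s, Set.mem_insert s _, Set.mem_insert s C⟩
      fun v hv hsv he => hsep v hv hsv (inBall_inter_eq_of_subset (Set.subset_insert s C) he)⟩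
  simp only [not_forall, not_not] at hsep
  obtain ⟨w, hw, hsw, hsw'⟩ := hsep
  obtain ⟨x, hx⟩ : ∃ x, ¬(x ∈ inBall A s ↔ x ∈ inBall A w) :=
    not_forall.mp (mt Set.ext (hD s w hsw))
  refine ⟨x, (h.mono (Set.subset_insert x C)).insert_of_forall_ne ?_ fun v hv hsv he => ?_⟩
  · exact (hsw' ▸ h.1 w hw).mono (Set.inter_subset_inter_right _ (Set.subset_insert x C))
  obtain rfl | hvw := eq_or_ne v w
  · exact hx ⟨fun hxs => (he.subset ⟨hxs, Set.mem_insert x C⟩).1,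
      fun hxv => (he.symm.subset ⟨hxv, Set.mem_insert x C⟩).1⟩
  · exact h.2 hv hw hvw ((inBall_inter_eq_of_subset (Set.subset_insert x C) he).symm.trans hsw')

lemma exists_union (hD : TwinFree A) (h : IsIdCodeOn A C W) {T : Set V} (hT : T.Finite) :
    ∃ C₂ : Set V, C₂.ncard ≤ C.ncard + T.ncard ∧ IsIdCodeOn A C₂ (W ∪ T) := by
  induction T, hT using Set.Finite.induction_on with
  | empty => exact ⟨C, by simp, by simpa using h⟩
  | @insert a T haT hT ih =>
    obtain ⟨C₂, hcard, hC₂⟩ := ih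
    obtain ⟨x, hx⟩ := hC₂.exists_insert hD a
    refine ⟨insert x C₂, ?_, Set.union_insert ▸ hx⟩
    calc (insert x C₂).ncard ≤ C₂.ncard + 1 := Set.ncard_insert_le x C₂
      _ ≤ C.ncard + (insert a T).ncard := by
        rw [Set.ncard_insert_of_notMem haT hT]; omega

lemma isIdCode (h : IsIdCodeOn A C Set.univ) : IsIdCode A C :=
  ⟨fun u => h.1 u trivial, fun _ _ huv => h.2 trivial trivial huv⟩

end IsIdCodeOn

lemma inBall_subtype (U : Set V) (u : U) :
    inBall (fun u v : U => A u v) u = Subtype.val ⁻¹' inBall A u := by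
  ext w
  simp [inBall, Subtype.ext_iff]

lemma image_val_inBall_inter (U : Set V) (u : U) (C : Set U) :
    Subtype.val '' (inBall (fun u v : U => A u v) u ∩ C) = inBall A u ∩ Subtype.val '' C := by
  rw [inBall_subtype, Set.inter_comm, Set.image_inter_preimage, Set.inter_comm]

lemma IsIdCode.isIdCodeOn_image_val {U : Set V} {C : Set U}
    (h : IsIdCode (fun u v : U => A u v) C) : IsIdCodeOn A (Subtype.val '' C) U := by
  refine ⟨fun u hu => ?_, fun u hu v hv huv he => ?_⟩
  · simpa only [image_val_inBall_inter] using (h.1 ⟨u, hu⟩).image Subtype.val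
  · refine h.2 ⟨u, hu⟩ ⟨v, hv⟩ (by simpa using huv)
      (Set.image_injective.mpr Subtype.val_injective ?_)
    simpa only [image_val_inBall_inter] using he

lemma TwinFree.isIdCode_univ (hA : TwinFree A) : IsIdCode A Set.univ :=
  ⟨fun u => ⟨u, Set.mem_insert u _, trivial⟩,
    fun u v huv => by simpa only [Set.inter_univ] using hA u v huv⟩

lemma gammaID_le {C : Set V} (h : IsIdCode A C) : gammaID A ≤ C.ncard :=
  Nat.sInf_le ⟨C, h, rfl⟩

lemma TwinFree.exists_isIdCode_ncard_eq_gammaID (hA : TwinFree A) :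
    ∃ C : Set V, IsIdCode A C ∧ C.ncard = gammaID A :=
  Nat.sInf_mem (s := {n | ∃ C : Set V, IsIdCode A C ∧ C.ncard = n})
    ⟨_, Set.univ, hA.isIdCode_univ, rfl⟩

end

/-- If `D` is a finite twin-free digraph and `S` a set of vertices such that the induced
subdigraph `D - S` is twin-free, then `γᴵᴰ(D) ≤ γᴵᴰ(D - S) + |S|`. -/
theorem gammaID_le_of_delete {V : Type} [Fintype V] (A : V → V → Prop) (S : Set V)
    (hD : TwinFree A)
    (hDS : TwinFree (fun u v : ↥(Sᶜ) => A u v)) :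
    gammaID A ≤ gammaID (fun u v : ↥(Sᶜ) => A u v) + S.ncard := by
  obtain ⟨C', hC', hcard⟩ := hDS.exists_isIdCode_ncard_eq_gammaID
  obtain ⟨C, hCcard, hC⟩ := hC'.isIdCodeOn_image_val.exists_union hD (Set.toFinite S)
  rw [Set.compl_union_self] at hC
  calc gammaID A ≤ C.ncard := gammaID_le hC.isIdCode
    _ ≤ (Subtype.val '' C').ncard + S.ncard := hCcard
    _ = gammaID (fun u v : ↥(Sᶜ) => A u v) + S.ncard := by
      rw [Set.ncard_image_of_injective _ Subtype.val_injective, hcard]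
end

section
/- Every digraph in the class (K₁, ⊕, ⊲⃗) — the closure of the single-vertex digraph under disjoint union and the operation of adding a new source adjacent to all existing vertices — is the transitive closure of a rooted oriented forest. -/
/-!
Induct on the construction. A single vertex is the closure of the empty forest, and the closure
of a disjoint union of forests is the disjoint union of their closures. For the cone over `D`,
take a forest `F` whose closure is `D` and join the new vertex to the roots of `F`: since `D` is
finite and `F` is acyclic, every vertex of `D` lies below some root, so the new vertex reaches
all of `D`.
-/

inductive ExtClass : (W : Type) → (W → W → Prop) → Prop
  | single : ExtClass PUnit (fun _ _ => False)
  | union {W₁ W₂ : Type} {A₁ : W₁ → W₁ → Prop} {A₂ : W₂ → W₂ → Prop} :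
      ExtClass W₁ A₁ → ExtClass W₂ A₂ →
      ExtClass (W₁ ⊕ W₂) (fun x y =>
        match x, y with
        | .inl a, .inl b => A₁ a b
        | .inr a, .inr b => A₂ a b
        | _, _ => False)
  | cone {W : Type} {A : W → W → Prop} :
      ExtClass W A →
      ExtClass (Option W) (fun x y =>
        match x, y with
        | some a, some b => A a b
        | none, some _ => True
        | _, none => False)

/-- A digraph `(V, A)` belongs to the class `(K₁, ⊕, ⊲⃗)` if it is isomorphic to a
digraph built from `K₁` by disjoint unions and additions of a universal source. -/
def InExtClass (V : Type) (A : V → V → Prop) : Prop :=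
  ∃ (W : Type) (B : W → W → Prop), ExtClass W B ∧
    ∃ e : V ≃ W, ∀ x y : V, A x y ↔ B (e x) (e y)

open Relation Function

variable {α β : Type*}

structure IsRootedForest (F : α → α → Prop) : Prop where
  eq_of_rel_of_rel : ∀ x y z, F x z → F y z → x = y
  not_transGen_self : ∀ x, ¬ TransGen F x x

def IsForestClosure (A : α → α → Prop) : Prop :=
  ∃ F, IsRootedForest F ∧ ∀ x y, A x y ↔ TransGen F x y

theorem ExtClass.finite {W : Type} {B : W → W → Prop} (h : ExtClass W B) : Finite W := by
  induction h with
  | single => infer_instance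
  | union _ _ ih₁ ih₂ => have := ih₁; have := ih₂; infer_instance
  | cone _ ih => have := ih; infer_instance

theorem exists_root_reflTransGen [Finite α] {F : α → α → Prop}
    (hF : ∀ x, ¬ TransGen F x x) (b : α) : ∃ a, (∀ z, ¬ F z a) ∧ ReflTransGen F a b := by
  have : Std.Irrefl (TransGen F) := ⟨hF⟩
  obtain ⟨a, hab, hmin⟩ := (Finite.wellFounded_of_trans_of_irrefl (TransGen F)).has_min
    {a | ReflTransGen F a b} ⟨b, .refl⟩
  exact ⟨a, fun z hza => hmin z (hab.head hza) (.single hza), hab⟩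

theorem transGen_onFun_equiv_iff (e : α ≃ β) (F : β → β → Prop) (x y : α) :
    TransGen (F on e) x y ↔ TransGen F (e x) (e y) := by
  refine ⟨fun h => TransGen.lift e le_rfl _ _ h, fun h => ?_⟩
  simpa [onFun] using TransGen.lift e.symm (p := F on e) (fun a b => by simp [onFun]) _ _ h

theorem IsForestClosure.of_equiv {A : α → α → Prop} {B : β → β → Prop} (e : α ≃ β)
    (he : ∀ x y, A x y ↔ B (e x) (e y)) (hB : IsForestClosure B) : IsForestClosure A := by
  obtain ⟨F, hF, hBF⟩ := hB
  refine ⟨F on e,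
    ⟨fun x y z hx hy => e.injective (hF.eq_of_rel_of_rel _ _ _ hx hy), fun x hx => ?_⟩,
    fun x y => by rw [he, hBF, transGen_onFun_equiv_iff]⟩
  exact hF.not_transGen_self (e x) ((transGen_onFun_equiv_iff e F x x).1 hx)

theorem isForestClosure_bot : IsForestClosure (fun _ _ : α => False) := by
  have : IsTrans α (fun _ _ => False) := ⟨fun _ _ _ h => h.elim⟩
  refine ⟨fun _ _ => False, ⟨fun _ _ _ h => h.elim, fun x => ?_⟩, fun x y => ?_⟩ <;>
    simp [transGen_eq_self]

theorem Sum.transGen_liftRel (r : α → α → Prop) (s : β → β → Prop) :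
    TransGen (Sum.LiftRel r s) = Sum.LiftRel (TransGen r) (TransGen s) := by
  ext x y
  constructor
  · intro h
    induction h with
    | single h => exact h.mono (fun _ _ => .single) (fun _ _ => .single)
    | tail _ hyz ih =>
      cases ih <;> cases hyz
      · exact .inl (.tail ‹_› ‹_›)
      · exact .inr (.tail ‹_› ‹_›)
  · rintro (⟨h⟩ | ⟨h⟩)
    · exact TransGen.lift _ (fun _ _ => .inl) _ _ h
    · exact TransGen.lift _ (fun _ _ => .inr) _ _ h

theorem IsRootedForest.sumLiftRel {F₁ : α → α → Prop} {F₂ : β → β → Prop}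
    (h₁ : IsRootedForest F₁) (h₂ : IsRootedForest F₂) :
    IsRootedForest (Sum.LiftRel F₁ F₂) where
  eq_of_rel_of_rel := by
    rintro _ _ _ (hx | hx) hy <;> cases hy
    · exact congrArg _ (h₁.eq_of_rel_of_rel _ _ _ hx ‹_›)
    · exact congrArg _ (h₂.eq_of_rel_of_rel _ _ _ hx ‹_›)
  not_transGen_self x hx := by
    rw [Sum.transGen_liftRel] at hx
    rcases hx with ⟨hx⟩ | ⟨hx⟩
    exacts [h₁.not_transGen_self _ hx, h₂.not_transGen_self _ hx]

theorem IsForestClosure.sumLiftRel {A₁ : α → α → Prop} {A₂ : β → β → Prop}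
    (h₁ : IsForestClosure A₁) (h₂ : IsForestClosure A₂) :
    IsForestClosure (Sum.LiftRel A₁ A₂) := by
  obtain ⟨F₁, hF₁, hA₁⟩ := h₁
  obtain ⟨F₂, hF₂, hA₂⟩ := h₂
  refine ⟨Sum.LiftRel F₁ F₂, hF₁.sumLiftRel hF₂, fun x y => ?_⟩
  rw [Sum.transGen_liftRel]
  cases x <;> cases y <;> simp [hA₁, hA₂]

def Option.coneRel (r : α → α → Prop) (p : α → Prop) : Option α → Option α → Prop
  | some a, some b => r a b
  | none, some b => p b
  | _, none => False

theorem Option.transGen_coneRel (r : α → α → Prop) (p : α → Prop) :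
    TransGen (coneRel r p) = coneRel (TransGen r) (fun b => ∃ a, p a ∧ ReflTransGen r a b) := by
  ext x y
  constructor
  · intro h
    induction h with
    | @single z h =>
      rcases x with _ | a <;> rcases z with _ | b
      exacts [h.elim, ⟨b, h, .refl⟩, h.elim, .single h]
    | @tail y z _ hyz ih =>
      rcases x with _ | a <;> rcases y with _ | b <;> rcases z with _ | c
      all_goals simp only [Option.coneRel] at hyz ih ⊢
      · obtain ⟨a, ha, hab⟩ := ih
        exact ⟨a, ha, hab.tail hyz⟩
      · exact TransGen.tail ih hyz
  · intro h
    rcases x with _ | a <;> rcases y with _ | b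
    · exact h.elim
    · obtain ⟨a, ha, hab⟩ := h
      exact TransGen.head' (b := some a) ha (hab.lift some fun _ _ => id)
    · exact h.elim
    · exact TransGen.lift some (fun _ _ => id) _ _ h

theorem IsRootedForest.coneRel_roots {F : α → α → Prop} (hF : IsRootedForest F) :
    IsRootedForest (Option.coneRel F fun b => ∀ z, ¬ F z b) where
  eq_of_rel_of_rel := by
    rintro (_ | x) (_ | y) (_ | z) hx hy
    all_goals simp only [Option.coneRel] at hx hy ⊢
    · exact (hx y hy).elim
    · exact (hy x hx).elim
    · exact congrArg _ (hF.eq_of_rel_of_rel x y z hx hy)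
  not_transGen_self x hx := by
    rw [Option.transGen_coneRel] at hx
    rcases x with _ | a
    exacts [hx, hF.not_transGen_self a hx]

theorem IsForestClosure.coneRel_true [Finite α] {A : α → α → Prop} (hA : IsForestClosure A) :
    IsForestClosure (Option.coneRel A fun _ => True) := by
  obtain ⟨F, hF, hAF⟩ := hA
  refine ⟨_, hF.coneRel_roots, fun x y => ?_⟩
  rw [Option.transGen_coneRel]
  rcases x with _ | a <;> rcases y with _ | b
  · exact Iff.rfl
  · simpa [Option.coneRel] using exists_root_reflTransGen hF.not_transGen_self b
  · exact Iff.rfl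
  · exact hAF a b

theorem ExtClass.isForestClosure {W : Type} {B : W → W → Prop} (h : ExtClass W B) :
    IsForestClosure B := by
  induction h with
  | single => exact isForestClosure_bot
  | union _ _ ih₁ ih₂ =>
    refine (ih₁.sumLiftRel ih₂).of_equiv (Equiv.refl _) fun x y => ?_
    cases x <;> cases y <;> simp
  | cone hA ih =>
    have := hA.finite
    refine ih.coneRel_true.of_equiv (Equiv.refl _) fun x y => ?_
    rcases x with _ | a <;> rcases y with _ | b <;> exact Iff.rfl

theorem extClass_transClosure_forest_general {V : Type} (A : V → V → Prop)
    (h : InExtClass V A) :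
    ∃ F : V → V → Prop,
      (∀ x y z : V, F x z → F y z → x = y) ∧
      (∀ x : V, ¬ Relation.TransGen F x x) ∧
      (∀ x y : V, A x y ↔ Relation.TransGen F x y) := by
  obtain ⟨W, B, hB, e, he⟩ := h
  obtain ⟨F, ⟨hin, hacyc⟩, hAF⟩ := hB.isForestClosure.of_equiv e he
  exact ⟨F, hin, hacyc, hAF⟩

/-- Every digraph in the class `(K₁, ⊕, ⊲⃗)` is the transitive closure of a rooted
oriented forest: a relation `F` in which every vertex has at most one `F`-in-neighbour
and which has no directed cycles. -/
theorem extClass_transClosure_forest {V : Type} [Fintype V] (A : V → V → Prop)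
    (h : InExtClass V A) :
    ∃ F : V → V → Prop,
      (∀ x y z : V, F x z → F y z → x = y) ∧
      (∀ x : V, ¬ Relation.TransGen F x x) ∧
      (∀ x y : V, A x y ↔ Relation.TransGen F x y) :=
  extClass_transClosure_forest_general A h
end

section
/- For every digraph D in the class (K₁, ⊕, ⊲⃗), the only identifying code of D is the whole vertex set; that is, the minimum identifying code has size |V(D)|. -/
/-!
Call a vertex `v` forced if either its closed in-neighbourhood is `{v}`, or some other vertex `u`
has the same closed in-neighbourhood as `v` once `v` itself is removed. A code avoiding a forced
vertex `v` either fails to dominate `v` or fails to separate `u` from `v`, so every identifying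
code contains all forced vertices. In the class `(K₁, ⊕, ⊲⃗)` every vertex is forced: disjoint
unions keep in-neighbourhoods, and adding a universal source `x` above `D` turns `x` into the
witness `u` for every vertex of `D` with no in-neighbour, while `x` itself has no in-neighbour.
-/

-- The relations built by the constructors `ExtClass.union` and `ExtClass.cone`.
def sumAdj {W₁ W₂ : Type} (A₁ : W₁ → W₁ → Prop) (A₂ : W₂ → W₂ → Prop) :
    W₁ ⊕ W₂ → W₁ ⊕ W₂ → Prop
  | .inl a, .inl b => A₁ a b
  | .inr a, .inr b => A₂ a b
  | _, _ => False

def coneAdj {W : Type} (A : W → W → Prop) : Option W → Option W → Prop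
  | some a, some b => A a b
  | none, some _ => True
  | _, none => False

def IsForced {V : Type} (A : V → V → Prop) (v : V) : Prop :=
  inBall A v = {v} ∨ ∃ u, u ≠ v ∧ inBall A u \ {v} = inBall A v \ {v}

section inBall

variable {V W : Type}

lemma mem_inBall {A : V → V → Prop} {w x : V} : w ∈ inBall A x ↔ w = x ∨ A w x :=
  Iff.rfl

lemma inBall_eq_preimage_of_iff {A : V → V → Prop} {B : W → W → Prop} (e : V ≃ W)
    (he : ∀ x y, A x y ↔ B (e x) (e y)) (x : V) : inBall A x = e ⁻¹' inBall B (e x) := by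
  ext w
  simp only [Set.mem_preimage, mem_inBall, he, e.apply_eq_iff_eq]

variable {W₁ W₂ : Type} (A₁ : W₁ → W₁ → Prop) (A₂ : W₂ → W₂ → Prop) (A : W → W → Prop)

lemma inBall_sumAdj_inl (a : W₁) :
    inBall (sumAdj A₁ A₂) (.inl a) = Sum.inl '' inBall A₁ a := by
  ext (w | w) <;> simp [mem_inBall, sumAdj]

lemma inBall_sumAdj_inr (a : W₂) :
    inBall (sumAdj A₁ A₂) (.inr a) = Sum.inr '' inBall A₂ a := by
  ext (w | w) <;> simp [mem_inBall, sumAdj]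

lemma inBall_coneAdj_none : inBall (coneAdj A) none = {none} := by
  ext (_ | w) <;> simp [mem_inBall, coneAdj]

lemma inBall_coneAdj_some (a : W) :
    inBall (coneAdj A) (some a) = insert none (some '' inBall A a) := by
  ext (_ | w) <;> simp [mem_inBall, coneAdj]

end inBall

section IsForced

variable {V W : Type}

lemma IsIdCode.mem_of_isForced {A : V → V → Prop} {C : Set V} (hC : IsIdCode A C) {v : V}
    (hv : IsForced A v) : v ∈ C := by
  by_contra hvC
  rcases hv with hsrc | ⟨u, huv, htwin⟩
  · obtain ⟨w, hwv, hwC⟩ := hC.1 v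
    rw [hsrc, Set.mem_singleton_iff] at hwv
    exact hvC (hwv ▸ hwC)
  · have hdiff (s : Set V) : s ∩ C = (s \ {v}) ∩ C := by
      rw [Set.sdiff_inter_right_comm, Set.sdiff_singleton_eq_self (fun h => hvC h.2)]
    exact hC.2 u v huv (by rw [hdiff, htwin, ← hdiff])

lemma IsForced.map {A : V → V → Prop} {B : W → W → Prop} {f : V → W} (hf : f.Injective)
    (hball : ∀ x, inBall B (f x) = f '' inBall A x) {v : V} (hv : IsForced A v) :
    IsForced B (f v) := by
  rcases hv with hsrc | ⟨u, huv, htwin⟩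
  · exact .inl (by rw [hball, hsrc, Set.image_singleton])
  · refine .inr ⟨f u, hf.ne huv, ?_⟩
    rw [hball, hball, ← Set.image_singleton, ← Set.image_sdiff hf, ← Set.image_sdiff hf, htwin]

lemma isForced_sumAdj {W₁ W₂ : Type} {A₁ : W₁ → W₁ → Prop} {A₂ : W₂ → W₂ → Prop}
    (h₁ : ∀ v, IsForced A₁ v) (h₂ : ∀ v, IsForced A₂ v) : ∀ v, IsForced (sumAdj A₁ A₂) v
  | .inl a => (h₁ a).map Sum.inl_injective (inBall_sumAdj_inl A₁ A₂)
  | .inr a => (h₂ a).map Sum.inr_injective (inBall_sumAdj_inr A₁ A₂)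

lemma isForced_coneAdj {A : W → W → Prop} (h : ∀ v, IsForced A v) :
    ∀ v, IsForced (coneAdj A) v
  | none => .inl (inBall_coneAdj_none A)
  | some a => by
    refine .inr ?_
    rcases h a with hsrc | ⟨u, huv, htwin⟩
    · refine ⟨none, Option.some_ne_none a ∘ Eq.symm, ?_⟩
      rw [inBall_coneAdj_none, inBall_coneAdj_some, hsrc, Set.image_singleton]
      ext (_ | w) <;> simp
    · refine ⟨some u, Option.some_injective _ |>.ne huv, ?_⟩
      have hnone : none ∉ ({some a} : Set (Option W)) := by simp
      rw [inBall_coneAdj_some, inBall_coneAdj_some, Set.insert_sdiff_of_notMem _ hnone,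
        Set.insert_sdiff_of_notMem _ hnone, ← Set.image_singleton,
        ← Set.image_sdiff (Option.some_injective _), ← Set.image_sdiff (Option.some_injective _),
        htwin]

end IsForced

lemma ExtClass.isForced {W : Type} {B : W → W → Prop} (h : ExtClass W B) :
    ∀ v, IsForced B v := by
  induction h with
  | single => exact fun _ => .inl (by ext; simp [mem_inBall])
  | union _ _ ih₁ ih₂ => exact isForced_sumAdj ih₁ ih₂
  | cone _ ih => exact isForced_coneAdj ih

lemma InExtClass.isForced {V : Type} {A : V → V → Prop} (h : InExtClass V A) (v : V) :
    IsForced A v := by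
  obtain ⟨W, B, hB, e, he⟩ := h
  have hball (y : W) : inBall A (e.symm y) = e.symm '' inBall B y := by
    rw [inBall_eq_preimage_of_iff e he, e.apply_symm_apply, e.image_symm_eq_preimage]
  simpa using (hB.isForced (e v)).map e.symm.injective hball

theorem extClass_only_idCode_univ_general {V : Type} (A : V → V → Prop)
    (h : InExtClass V A) :
    ∀ C : Set V, IsIdCode A C → C = Set.univ :=
  fun _ hC => Set.eq_univ_of_forall fun _ => hC.mem_of_isForced (h.isForced _)

/-- For every digraph in the class `(K₁, ⊕, ⊲⃗)`, the only identifying code is the whole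
vertex set; in particular the minimum identifying code has size `|V(D)|`. -/
theorem extClass_only_idCode_univ {V : Type} [Fintype V] (A : V → V → Prop)
    (h : InExtClass V A) :
    ∀ C : Set V, IsIdCode A C → C = Set.univ :=
  extClass_only_idCode_univ_general A h
end

section
/- Let D be a digraph in the class (K₁, ⊕, ⊲⃗), which is the transitive closure of a rooted oriented forest F. For any vertex x: if x is a source (a root of F), then V(D) \ {x} is a separating code of D; otherwise, x and its father in F are the unique pair of distinct vertices not separated by V(D) \ {x}. -/
/-! Write `C = V(D) - x`. A vertex `u ≠ x` lies in its own trace `B₁⁺(u) ∩ C`, so two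
vertices other than `x` with equal traces would be in-neighbours of each other, which the
strict order `D` forbids: every pair not separated by `C` contains `x`. If `x` is a source,
no other vertex lies in `B₁⁺(x)`, so no pair is left. Otherwise, since every vertex of `F`
has at most one father `f`, the in-neighbours of `x` in `D` are exactly `B₁⁺(f)`, so `x`
and `f` have the same trace, and by the first step `f` is the only partner of `x`. -/

section InBall

variable {V : Type} {A : V → V → Prop}

theorem mem_inBall_self (u : V) : u ∈ inBall A u := Set.mem_insert u _

theorem mem_inBall_of_inBall_inter_eq {C : Set V} {u v : V} (hu : u ∈ C)
    (h : inBall A u ∩ C = inBall A v ∩ C) : u ∈ inBall A v :=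
  (h ▸ ⟨mem_inBall_self u, hu⟩ : u ∈ inBall A v ∩ C).1

theorem eq_of_inBall_inter_eq (hA : ∀ a b, A a b → ¬ A b a) {C : Set V} {u v : V}
    (hu : u ∈ C) (hv : v ∈ C) (h : inBall A u ∩ C = inBall A v ∩ C) : u = v := by
  rcases mem_inBall_of_inBall_inter_eq hu h with huv | huv
  · exact huv
  rcases mem_inBall_of_inBall_inter_eq hv h.symm with hvu | hvu
  · exact hvu.symm
  · exact absurd hvu (hA u v huv)

theorem eq_or_eq_of_inBall_inter_compl_eq (hA : ∀ a b, A a b → ¬ A b a) {x u v : V}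
    (huv : u ≠ v) (h : inBall A u ∩ {x}ᶜ = inBall A v ∩ {x}ᶜ) : u = x ∨ v = x := by
  by_contra! hne
  exact huv (eq_of_inBall_inter_eq hA hne.1 hne.2 h)

theorem isSepCode_compl_singleton_of_source (hA : ∀ a b, A a b → ¬ A b a) {x : V}
    (hx : ∀ w, ¬ A w x) : IsSepCode A {x}ᶜ := by
  have trace_ne : ∀ u, u ≠ x → inBall A u ∩ {x}ᶜ ≠ inBall A x ∩ {x}ᶜ := fun u hu h =>
    (mem_inBall_of_inBall_inter_eq hu h).elim hu (hx u)
  intro u v huv h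
  rcases eq_or_eq_of_inBall_inter_compl_eq hA huv h with rfl | rfl
  · exact trace_ne v huv.symm h.symm
  · exact trace_ne u huv h

theorem inBall_inter_compl_eq_iff (hA : ∀ a b, A a b → ¬ A b a) {x f u v : V} (hfx : f ≠ x)
    (hxf : inBall A x ∩ {x}ᶜ = inBall A f ∩ {x}ᶜ) (huv : u ≠ v) :
    inBall A u ∩ {x}ᶜ = inBall A v ∩ {x}ᶜ ↔ (u = x ∧ v = f) ∨ (u = f ∧ v = x) := by
  constructor
  · intro h
    rcases eq_or_eq_of_inBall_inter_compl_eq hA huv h with rfl | rfl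
    · exact .inl ⟨rfl, eq_of_inBall_inter_eq hA huv.symm hfx (h.symm.trans hxf)⟩
    · exact .inr ⟨eq_of_inBall_inter_eq hA huv hfx (h.trans hxf), rfl⟩
  · rintro (⟨rfl, rfl⟩ | ⟨rfl, rfl⟩)
    exacts [hxf, hxf.symm]

end InBall

section Forest

variable {V : Type} {F : V → V → Prop}

theorem inBall_transGen (v : V) :
    inBall (Relation.TransGen F) v = {w | Relation.ReflTransGen F w v} := by
  ext w
  simp [inBall, Relation.reflTransGen_iff_eq_or_transGen, eq_comm]

theorem setOf_transGen_eq_inBall_of_father (hF : ∀ a b c, F a c → F b c → a = b) {f x : V}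
    (hf : F f x) : {w | Relation.TransGen F w x} = inBall (Relation.TransGen F) f := by
  rw [inBall_transGen]
  ext w
  simp only [Set.mem_ofPred_eq, Relation.TransGen.tail'_iff]
  exact ⟨fun ⟨b, hwb, hbx⟩ => hF b f x hbx hf ▸ hwb, fun hwf => ⟨f, hwf, hf⟩⟩

theorem inBall_transGen_inter_compl_eq_of_father (hF : ∀ a b c, F a c → F b c → a = b)
    {f x : V} (hf : F f x) :
    inBall (Relation.TransGen F) x ∩ {x}ᶜ = inBall (Relation.TransGen F) f ∩ {x}ᶜ := by
  rw [inBall, Set.insert_inter_of_notMem (by simp), setOf_transGen_eq_inBall_of_father hF hf]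

end Forest

theorem extClass_sep_minus_vertex_general {V : Type} (A F : V → V → Prop)
    (hF1 : ∀ x y z : V, F x z → F y z → x = y)
    (hF2 : ∀ x : V, ¬ Relation.TransGen F x x)
    (hF3 : ∀ x y : V, A x y ↔ Relation.TransGen F x y)
    (x : V) :
    ((∀ w : V, ¬ A w x) → IsSepCode A ({x}ᶜ : Set V)) ∧
    ((∃ w : V, A w x) → ∃ f : V, F f x ∧
      ∀ u v : V, u ≠ v →
        (inBall A u ∩ ({x}ᶜ : Set V) = inBall A v ∩ ({x}ᶜ : Set V) ↔
          (u = x ∧ v = f) ∨ (u = f ∧ v = x))) := by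
  obtain rfl : A = Relation.TransGen F := by
    funext a b
    exact propext (hF3 a b)
  have hasymm : ∀ a b, Relation.TransGen F a b → ¬ Relation.TransGen F b a :=
    fun a _ hab hba => hF2 a (hab.trans hba)
  refine ⟨isSepCode_compl_singleton_of_source hasymm, fun ⟨w, hw⟩ => ?_⟩
  obtain ⟨f, -, hf⟩ := Relation.TransGen.tail'_iff.mp hw
  have hfx : f ≠ x := by
    rintro rfl
    exact hF2 f (.single hf)
  exact ⟨f, hf, fun u v huv => inBall_inter_compl_eq_iff hasymm hfx
    (inBall_transGen_inter_compl_eq_of_father hF1 hf) huv⟩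

/-- Let `D ∈ (K₁, ⊕, ⊲⃗)` be the transitive closure of the rooted oriented forest `F`.
For any vertex `x`: if `x` is a source then `V(D) - x` is a separating code; otherwise
`x` and its father in `F` are the unique pair of distinct vertices not separated by
`V(D) - x`. -/
theorem extClass_sep_minus_vertex {V : Type} [Fintype V] (A F : V → V → Prop)
    (hcls : InExtClass V A)
    (hF1 : ∀ x y z : V, F x z → F y z → x = y)
    (hF2 : ∀ x : V, ¬ Relation.TransGen F x x)
    (hF3 : ∀ x y : V, A x y ↔ Relation.TransGen F x y)
    (x : V) :
    ((∀ w : V, ¬ A w x) → IsSepCode A ({x}ᶜ : Set V)) ∧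
    ((∃ w : V, A w x) → ∃ f : V, F f x ∧
      ∀ u v : V, u ≠ v →
        (inBall A u ∩ ({x}ᶜ : Set V) = inBall A v ∩ ({x}ᶜ : Set V) ↔
          (u = x ∧ v = f) ∨ (u = f ∧ v = x))) :=
  extClass_sep_minus_vertex_general A F hF1 hF2 hF3 x
end

section
/- Let G = (S ∪ T, E) be a bipartite graph with |S| = |T| = n such that the neighbourhoods N(s) for s ∈ S are pairwise distinct and all nonempty (G is S-identifiable). Then there exists an S-separating code C ⊆ T of size at most n - 1, i.e., a set C with N(u) ∩ C ≠ N(v) ∩ C for all distinct u, v ∈ S. -/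
/-!
If no single element `t` can be dropped while keeping the sets `f s` distinct, then for
every `t` some pair `u, v` has `f u ∆ f v = {t}`. Over `𝔽₂` the vector `e_u + e_v` lies in
the hyperplane of vectors with coordinate sum zero and is sent to `e_t` by
`w ↦ ∑ s, w s • 𝟙_{f s}`. So a subspace of dimension `|S| - 1` surjects onto `𝔽₂^T`,
forcing `|T| < |S|`.
-/

open scoped symmDiff
open Function

theorem Set.indicator_one_symmDiff_zmod_two {α : Type*} (s t : Set α) :
    (s ∆ t).indicator (1 : α → ZMod 2) = s.indicator 1 + t.indicator 1 := by
  ext x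
  by_cases hs : x ∈ s <;> by_cases ht : x ∈ t <;> simp [Set.mem_symmDiff, hs, ht]; decide

theorem Set.symmDiff_eq_singleton_of_sdiff_singleton_eq {α : Type*} {s t : Set α} {a : α}
    (h : s \ {a} = t \ {a}) (hst : s ≠ t) : s ∆ t = {a} := by
  refine (Set.Nonempty.subset_singleton_iff ?_).1 fun x hx => ?_
  · exact Set.nonempty_iff_ne_empty.2 fun h' => hst (symmDiff_eq_bot.1 h')
  · by_contra hxa
    have := Set.ext_iff.1 h x
    simp only [Set.mem_sdiff, hxa, not_false_eq_true, and_true] at this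
    rw [Set.mem_symmDiff] at hx
    tauto

section

variable {S T : Type*} [Fintype S] [Fintype T] {f : S → Set T}

open Module in
theorem card_lt_card_of_forall_symmDiff_eq_singleton [Nonempty S]
    (h : ∀ t, ∃ u v, f u ∆ f v = {t}) : Fintype.card T < Fintype.card S := by
  classical
  choose u v huv using h
  obtain ⟨s₀⟩ := ‹Nonempty S›
  let Φ := Fintype.linearCombination (ZMod 2) fun s => (f s).indicator (1 : T → ZMod 2)
  let H := LinearMap.ker (Fintype.linearCombination (ZMod 2) fun _ : S => (1 : ZMod 2))
  let ψ t : S → ZMod 2 := Pi.single (u t) 1 + Pi.single (v t) 1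
  have hψ_mem : ∀ t, ψ t ∈ H := fun t => by
    simp only [H, ψ, LinearMap.mem_ker, map_add, Fintype.linearCombination_apply_single]
    decide
  have hΦψ : ∀ t, Φ (ψ t) = Pi.single t 1 := fun t => by
    simp only [Φ, ψ, map_add, Fintype.linearCombination_apply_single, one_smul,
      ← Set.indicator_one_symmDiff_zmod_two, huv, Set.indicator_singleton, Pi.one_apply]
  have hmap : H.map Φ = ⊤ := by
    refine Submodule.eq_top_iff'.2 fun y =>
      ⟨∑ t, y t • ψ t, H.sum_mem fun t _ => H.smul_mem _ (hψ_mem t), ?_⟩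
    simp only [map_sum, map_smul, hΦψ]
    exact (pi_eq_sum_univ' y).symm
  have hH : H ≠ ⊤ := fun hH => by
    have : Pi.single s₀ (1 : ZMod 2) ∈ H := hH ▸ Submodule.mem_top
    simp [H] at this
  calc Fintype.card T
      _ = finrank (ZMod 2) (H.map Φ) := by rw [hmap, finrank_top, finrank_fintype_fun_eq_card]
      _ ≤ finrank (ZMod 2) H := Submodule.finrank_map_le Φ H
      _ < finrank (ZMod 2) (S → ZMod 2) := Submodule.finrank_lt hH
      _ = Fintype.card S := finrank_fintype_fun_eq_card (ZMod 2)

theorem exists_injective_sdiff_singleton [Nonempty T] (hST : Fintype.card S ≤ Fintype.card T)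
    (hf : Injective f) : ∃ t, Injective fun s => f s \ {t} := by
  by_contra! h
  obtain hS | hS := isEmpty_or_nonempty S
  · exact h (Classical.arbitrary T) (injective_of_subsingleton _)
  refine absurd hST (not_le.2 (card_lt_card_of_forall_symmDiff_eq_singleton (f := f) fun t => ?_))
  obtain ⟨u, v, huv, hne⟩ := not_injective_iff.1 (h t)
  exact ⟨u, v, Set.symmDiff_eq_singleton_of_sdiff_singleton_eq huv (hf.ne hne)⟩

end

theorem bondy_bipartite_general {S T : Type} [Fintype S] [Fintype T] (n : ℕ)
    (hS : Fintype.card S = n) (hT : Fintype.card T = n)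
    (E : S → T → Prop)
    (hdist : ∀ u v : S, u ≠ v → {t | E u t} ≠ {t | E v t}) :
    ∃ C : Set T, C.ncard ≤ n - 1 ∧
      ∀ u v : S, u ≠ v → {t | E u t} ∩ C ≠ {t | E v t} ∩ C := by
  obtain hT₀ | hT₀ := isEmpty_or_nonempty T
  · have : IsEmpty S := Fintype.card_eq_zero_iff.1 (by rw [hS, ← hT, Fintype.card_eq_zero])
    exact ⟨∅, by simp, fun u => isEmptyElim u⟩
  have hinj : Injective fun s => {t | E s t} := fun u v h => by_contra fun huv => hdist u v huv h
  obtain ⟨t₀, ht₀⟩ := exists_injective_sdiff_singleton (hS.trans hT.symm).le hinj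
  refine ⟨{t₀}ᶜ, ?_, fun u v huv h => huv (ht₀ ?_)⟩
  · have := Set.ncard_add_ncard_compl {t₀}
    rw [Set.ncard_singleton, Nat.card_eq_fintype_card, hT] at this
    omega
  · simpa only [Set.sdiff_eq] using h

/-- **Bondy's theorem in bipartite-graph language.** Let `G = (S ∪ T, E)` be an
`S`-identifiable bipartite graph with `|S| = |T| = n` (the neighbourhoods `N(s)` are
pairwise distinct and nonempty). Then there is an `S`-separating code `C ⊆ T` of size at
most `n - 1`. -/
theorem bondy_bipartite {S T : Type} [Fintype S] [Fintype T] (n : ℕ)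
    (hS : Fintype.card S = n) (hT : Fintype.card T = n)
    (E : S → T → Prop)
    (hdist : ∀ u v : S, u ≠ v → {t | E u t} ≠ {t | E v t})
    (hne : ∀ s : S, {t | E s t}.Nonempty) :
    ∃ C : Set T, C.ncard ≤ n - 1 ∧
      ∀ u v : S, u ≠ v → {t | E u t} ∩ C ≠ {t | E v t} ∩ C :=
  bondy_bipartite_general n hS hT E hdist
end

section
/- Let X be a finite set and 𝒜 a family of distinct nonempty subsets of X with |𝒜| = |X|. Then the set system (𝒜, X) is extremal (for every x ∈ X, either some A ∈ 𝒜 satisfies A \ {x} = ∅, or some distinct A, A' ∈ 𝒜 satisfy A \ {x} = A' \ {x}) if and only if: (1) the union of all sets in 𝒜 equals X, and (2) for every A ∈ 𝒜 with |A| ≥ 2, there exists x ∈ A such that A \ {x} ∈ 𝒜. -/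
/-!
Extremality says exactly that every `x` lies in some `B ∈ 𝒜` with `B.erase x ∈ 𝒜 ∪ {∅}`.
Then `1_{x} = 1_B - 1_{B.erase x}`, so the indicator vectors of the members of `𝒜` span `R^X`;
as there are `|X|` of them, they are linearly independent. If some `A ∈ 𝒜` with `|A| ≥ 2` had
no `A.erase x` in `𝒜`, none of these witnesses `B` for `x ∈ A` could be `A` or `A.erase x`, so
`1_A = ∑_{x ∈ A} 1_{x}` would lie in the span of the other indicators. Conversely, a smallest
member of `𝒜` containing `x` is a witness for `x`.
-/

/-- A set system `(𝒜, X)` of distinct nonempty subsets with `|𝒜| = |X|` is extremal if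
for every `x ∈ X`, either deleting `x` empties some member of `𝒜` or merges two distinct
members of `𝒜`. -/
def Extremal {X : Type} [DecidableEq X] (𝒜 : Finset (Finset X)) : Prop :=
  ∀ x : X, (∃ A ∈ 𝒜, A \ {x} = ∅) ∨
    (∃ A ∈ 𝒜, ∃ A' ∈ 𝒜, A ≠ A' ∧ A \ {x} = A' \ {x})

open Finset Submodule

variable {X : Type} [DecidableEq X]

lemma Finset.erase_eq_of_erase_eq_erase {A A' : Finset X} {x : X} (hne : A ≠ A')
    (h : A.erase x = A'.erase x) (hx : x ∈ A) : A.erase x = A' := by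
  have hx' : x ∉ A' := fun hx' ↦ hne <| by
    rw [← insert_erase hx, h, insert_erase hx']
  rw [h, erase_eq_of_notMem hx']

lemma extremal_iff_forall_exists_erase_mem {𝒜 : Finset (Finset X)}
    (hne : ∀ A ∈ 𝒜, A.Nonempty) :
    Extremal 𝒜 ↔ ∀ x, ∃ B ∈ 𝒜, x ∈ B ∧ B.erase x ∈ insert ∅ 𝒜 := by
  simp only [Extremal, sdiff_singleton_eq_erase]
  refine forall_congr' fun x ↦ ⟨?_, ?_⟩
  · rintro (⟨B, hB, hBx⟩ | ⟨B, hB, B', hB', hBB', hBx⟩)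
    · obtain ⟨y, hy⟩ := hne B hB
      have hyx : y = x := by_contra fun hyx ↦ by simpa [hBx] using mem_erase.2 ⟨hyx, hy⟩
      exact ⟨B, hB, hyx ▸ hy, hBx ▸ mem_insert_self _ _⟩
    · by_cases hx : x ∈ B
      · exact ⟨B, hB, hx, mem_insert_of_mem (erase_eq_of_erase_eq_erase hBB' hBx hx ▸ hB')⟩
      · have hx' : x ∈ B' := by
          by_contra hx'
          rw [erase_eq_of_notMem hx, erase_eq_of_notMem hx'] at hBx
          exact hBB' hBx
        exact ⟨B', hB', hx', mem_insert_of_mem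
          (erase_eq_of_erase_eq_erase (Ne.symm hBB') hBx.symm hx' ▸ hB)⟩
  · rintro ⟨B, hB, hxB, hBx⟩
    rcases mem_insert.1 hBx with hBx | hBx
    · exact .inl ⟨B, hB, hBx⟩
    · exact .inr ⟨B, hB, B.erase x, hBx, fun h ↦ notMem_erase x B (h ▸ hxB), by
        rw [erase_idem]⟩

lemma exists_erase_mem_insert_of_forall_erase_mem {𝒜 : Finset (Finset X)}
    (hcover : ∀ x, ∃ A ∈ 𝒜, x ∈ A) (herase : ∀ A ∈ 𝒜, 2 ≤ A.card → ∃ x ∈ A, A.erase x ∈ 𝒜)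
    (x : X) : ∃ B ∈ 𝒜, x ∈ B ∧ B.erase x ∈ insert ∅ 𝒜 := by
  obtain ⟨A, hA, hxA⟩ := hcover x
  obtain ⟨B, hB, hmin⟩ := exists_min_image (𝒜.filter (x ∈ ·)) card ⟨A, mem_filter.2 ⟨hA, hxA⟩⟩
  rw [mem_filter] at hB
  refine ⟨B, hB.1, hB.2, ?_⟩
  by_cases hcard : 2 ≤ B.card
  · obtain ⟨y, hyB, hBy⟩ := herase B hB.1 hcard
    obtain rfl | hyx := eq_or_ne y x
    · exact mem_insert_of_mem hBy
    · have := hmin _ (mem_filter.2 ⟨hBy, mem_erase.2 ⟨hyx.symm, hB.2⟩⟩)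
      have := card_erase_of_mem hyB
      omega
  · have : (B.erase x).card = 0 := by rw [card_erase_of_mem hB.2]; omega
    rw [card_eq_zero.1 this]
    exact mem_insert_self _ _

variable (R : Type*) [CommRing R]

def indicatorVec (B : Finset X) : X → R := ∑ x ∈ B, Pi.single x 1

variable {R}

lemma single_mem_span_indicatorVec {S : Set (Finset X)} {B : Finset X} {x : X} (hB : B ∈ S)
    (hxB : x ∈ B) (hBx : B.erase x ∈ insert ∅ S) :
    Pi.single x 1 ∈ span R (indicatorVec R '' S) := by
  have hsplit : Pi.single x (1 : R) = indicatorVec R B - indicatorVec R (B.erase x) := by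
    rw [indicatorVec, indicatorVec, ← add_sum_erase B _ hxB, add_sub_cancel_right]
  rw [hsplit]
  refine sub_mem (subset_span ⟨B, hB, rfl⟩) ?_
  rcases Set.mem_insert_iff.1 hBx with hBx | hBx
  · simp [hBx, indicatorVec]
  · exact subset_span ⟨_, hBx, rfl⟩

lemma indicatorVec_mem_span {S : Set (Finset X)} {A : Finset X}
    (h : ∀ x ∈ A, ∃ B ∈ S, x ∈ B ∧ B.erase x ∈ insert ∅ S) :
    indicatorVec R A ∈ span R (indicatorVec R '' S) :=
  sum_mem fun x hx ↦
    let ⟨_, hB, hxB, hBx⟩ := h x hx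
    single_mem_span_indicatorVec hB hxB hBx

lemma linearIndepOn_indicatorVec [Fintype X] [Nontrivial R] {𝒜 : Finset (Finset X)}
    (hcard : 𝒜.card = Fintype.card X) (h : ∀ x, ∃ B ∈ 𝒜, x ∈ B ∧ B.erase x ∈ insert ∅ 𝒜) :
    LinearIndepOn R (indicatorVec R) (𝒜 : Set (Finset X)) := by
  refine linearIndependent_of_top_le_span_of_card_eq_finrank ?_ ?_
  · rw [← (Pi.basisFun R X).span_eq, span_le]
    rintro _ ⟨x, rfl⟩
    obtain ⟨B, hB, hxB, hBx⟩ := h x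
    rw [Pi.basisFun_apply, ← Set.image_eq_range]
    have hBx' : B.erase x ∈ insert ∅ (𝒜 : Set (Finset X)) := by exact_mod_cast hBx
    exact single_mem_span_indicatorVec (mem_coe.2 hB) hxB hBx'
  · rw [Module.finrank_fintype_fun_eq_card, ← hcard]
    exact Fintype.card_coe 𝒜

lemma exists_erase_mem_of_card_eq_card [Fintype X] {𝒜 : Finset (Finset X)}
    (hcard : 𝒜.card = Fintype.card X)
    (h : ∀ x, ∃ B ∈ 𝒜, x ∈ B ∧ B.erase x ∈ insert ∅ 𝒜) {A : Finset X} (hA : A ∈ 𝒜)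
    (hA₂ : 2 ≤ A.card) : ∃ x ∈ A, A.erase x ∈ 𝒜 := by
  by_contra! hA𝒜
  refine (linearIndepOn_indicatorVec (R := ℚ) hcard h).notMem_span (mem_coe.2 hA) <|
    indicatorVec_mem_span fun x hxA ↦ ?_
  obtain ⟨B, hB, hxB, hBx⟩ := h x
  have hBA : B ≠ A := by
    rintro rfl
    rcases mem_insert.1 hBx with hBx | hBx
    · have := card_erase_of_mem hxA
      rw [hBx, card_empty] at this
      omega
    · exact hA𝒜 x hxA hBx
  have hBxA : B.erase x ≠ A := fun h ↦ notMem_erase x B (h ▸ hxA)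
  refine ⟨B, ⟨hB, hBA⟩, hxB, ?_⟩
  rcases mem_insert.1 hBx with hBx | hBx
  · exact .inl hBx
  · exact .inr ⟨hBx, hBxA⟩

/-- A set system `(𝒜, X)` of distinct nonempty subsets with `|𝒜| = |X|` is extremal iff
the union of all members of `𝒜` is `X` and every member of `𝒜` of size at least two has
an element whose removal yields another member of `𝒜`. -/
theorem extremal_iff_set_description {X : Type} [Fintype X] [DecidableEq X]
    (𝒜 : Finset (Finset X)) (hcard : 𝒜.card = Fintype.card X)
    (hne : ∀ A ∈ 𝒜, A.Nonempty) :
    Extremal 𝒜 ↔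
      ((∀ x : X, ∃ A ∈ 𝒜, x ∈ A) ∧
        (∀ A ∈ 𝒜, 2 ≤ A.card → ∃ x ∈ A, A.erase x ∈ 𝒜)) := by
  rw [extremal_iff_forall_exists_erase_mem hne]
  refine ⟨fun h ↦ ⟨fun x ↦ ?_, fun A hA ↦ exists_erase_mem_of_card_eq_card hcard h hA⟩,
    fun ⟨hcover, herase⟩ ↦ exists_erase_mem_insert_of_forall_erase_mem hcover herase⟩
  obtain ⟨B, hB, hxB, -⟩ := h x
  exact ⟨B, hB, hxB⟩
end
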